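/- In FDE+cmi, the join over all FDE values x of the value of x ∧ ¬x is T (even though no individual disjunct has value T): the values of x ∧ ¬x as x ranges over {T, B, N, F} are {F, B, N, F}, and the lattice join of B and N is T. Hence ∃p(p ∧ ¬p) has value T, and fails to define the constant B in the four-valued setting. -/

import Mathlib

/-- Truth values of FDE: T, B (both), N (neither), F. T and B are designated. -/
inductive FDE : Type | T | B | N | F
deriving DecidableEq

instance instFintypeFDE : Fintype FDE :=
  ⟨{FDE.T, FDE.B, FDE.N, FDE.F}, by intro x; cases x <;> simp⟩

namespace FDE

/-- Negation: swaps T and F, fixes B and N. -/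
def neg : FDE → FDE | T => F | F => T | B => B | N => N

/-- Lattice meet (conjunction): F bottom, T top, B and N incomparable. -/
def meet : FDE → FDE → FDE
  | T, y => y | x, T => x
  | F, _ => F | _, F => F
  | B, B => B | N, N => N
  | B, N => F | N, B => F

/-- Lattice join (disjunction). -/
def join : FDE → FDE → FDE
  | F, y => y | x, F => x
  | T, _ => T | _, T => T
  | B, B => B | N, N => N
  | B, N => T | N, B => T

/-- The cmi conditional: value of the consequent if the antecedent is designated
(T or B), and T otherwise. -/
def cmi : FDE → FDE → FDE
  | T, y => y | B, y => y
  | N, _ => T | F, _ => T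

/-- Designated values of FDE are T and B. -/
def designated (x : FDE) : Prop := x = T ∨ x = B

end FDE

theorem FDE.meet_neg_self_ne_T (x : FDE) : FDE.meet x (FDE.neg x) ≠ FDE.T := by
  cases x <;> decide

/-- The value of x ∧ ¬x for each of the four FDE values is F, B, N, F
respectively; the join of B and N is T; hence the join over all FDE values of
x ∧ ¬x (the value of ∃p(p ∧ ¬p)) is T, even though no disjunct is T, so
∃p(p ∧ ¬p) fails to define the constant B in the four-valued setting. -/
theorem fde_exists_contradiction_is_T :
    FDE.meet FDE.T (FDE.neg FDE.T) = FDE.F ∧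
    FDE.meet FDE.B (FDE.neg FDE.B) = FDE.B ∧
    FDE.meet FDE.N (FDE.neg FDE.N) = FDE.N ∧
    FDE.meet FDE.F (FDE.neg FDE.F) = FDE.F ∧
    (∀ x : FDE, FDE.meet x (FDE.neg x) ≠ FDE.T) ∧
    FDE.join FDE.B FDE.N = FDE.T ∧
    FDE.join (FDE.meet FDE.T (FDE.neg FDE.T))
      (FDE.join (FDE.meet FDE.B (FDE.neg FDE.B))
        (FDE.join (FDE.meet FDE.N (FDE.neg FDE.N))
          (FDE.meet FDE.F (FDE.neg FDE.F)))) = FDE.T :=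
  ⟨rfl, rfl, rfl, rfl, FDE.meet_neg_self_ne_T, rfl, rfl⟩
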